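/- For all h, κ > 0, the condition number √(1 + 16/(κh)²) of the local HDG matrix diag(4h - iκh², -iκh², -iκh²) is strictly larger than the condition number √(((κh)² + 4)/((κh)² + 1)) of the local CHDG matrix diag(2h - iκh², h - iκh², h - iκh²). -/
import Mathlib

/-- For all `h, κ > 0`, the condition number `√(1 + 16/(κh)²)` of the local HDG
matrix is strictly larger than the condition number `√(((κh)² + 4)/((κh)² + 1))`
of the local CHDG matrix. -/
theorem hdg_cond_gt_chdg_cond (κ h : ℝ) (hκ : 0 < κ) (hh : 0 < h) :
    Real.sqrt (((κ * h) ^ 2 + 4) / ((κ * h) ^ 2 + 1))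
      < Real.sqrt (1 + 16 / (κ * h) ^ 2) := by
  have hx : 0 < (κ * h) ^ 2 := by positivity
  apply Real.sqrt_lt_sqrt (by positivity)
  rw [div_lt_iff₀ (by positivity)]
  have : (1 + 16 / (κ * h) ^ 2) * ((κ * h) ^ 2 + 1)
      = ((κ * h) ^ 2 + 16) / (κ * h) ^ 2 * ((κ * h) ^ 2 + 1) := by
    field_simp
  rw [this, div_mul_eq_mul_div, lt_div_iff₀ hx]
  nlinarith
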